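/- In the WSPD-based graph G, for every set F of edges of G of maximum degree at most f, and every pair {p,q} that is an edge of K_S \ F, the shortest-path distance between p and q in G \ F is at most (1+ε)·|pq|. -/
import Mathlib


open Real

/-- Length of a walk in a graph whose vertices lie in a metric space:
the sum of the metric distances of consecutive vertices. -/
noncomputable def wlen {V : Type*} [PseudoMetricSpace V] {G : SimpleGraph V} {u v : V}
    (w : G.Walk u v) : ℝ :=
  (w.darts.map fun d : G.Dart => dist d.toProd.1 d.toProd.2).sum

/-- Shortest-path distance between two vertices of a metrically weighted graph. -/
noncomputable def gdist {V : Type*} [PseudoMetricSpace V] (G : SimpleGraph V) (p q : V) : ℝ :=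
  sInf {l : ℝ | ∃ w : G.Walk p q, wlen w = l}

/-- The set `F` of edges, viewed as a graph, has maximum degree at most `f`. -/
def maxDegLe {V : Type*} (F : Set (Sym2 V)) (f : ℕ) : Prop :=
  ∀ v : V, {e | e ∈ F ∧ v ∈ e}.encard ≤ (f : ℕ∞)

lemma wlen_nil {V : Type*} [PseudoMetricSpace V] {G : SimpleGraph V} {u : V} :
    wlen (SimpleGraph.Walk.nil : G.Walk u u) = 0 := by simp [wlen]

lemma wlen_cons {V : Type*} [PseudoMetricSpace V] {G : SimpleGraph V} {u v w : V}
    (h : G.Adj u v) (p : G.Walk v w) :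
    wlen (SimpleGraph.Walk.cons h p) = dist u v + wlen p := by
  simp [wlen]

lemma wlen_append {V : Type*} [PseudoMetricSpace V] {G : SimpleGraph V} {u v w : V}
    (p : G.Walk u v) (q : G.Walk v w) :
    wlen (p.append q) = wlen p + wlen q := by
  simp [wlen, SimpleGraph.Walk.darts_append]

lemma wlen_nonneg {V : Type*} [PseudoMetricSpace V] {G : SimpleGraph V} {u v : V}
    (w : G.Walk u v) : 0 ≤ wlen w := by
  apply List.sum_nonneg
  intro x hx
  simp only [List.mem_map] at hx
  obtain ⟨d, _, rfl⟩ := hx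
  exact dist_nonneg

lemma count_le {V : Type*} {F : Set (Sym2 V)} {f : ℕ} (hdeg : maxDegLe F f)
    (v : V) (T : Set V) (hT : T.Finite) (h : ∀ t ∈ T, s(v, t) ∈ F) : T.ncard ≤ f := by
  have hinj : Set.InjOn (fun t => s(v, t)) T := by
    intro a _ b _ hab
    exact Sym2.congr_right.mp hab
  have hsub : (fun t => s(v, t)) '' T ⊆ {e | e ∈ F ∧ v ∈ e} := by
    rintro e ⟨t, ht, rfl⟩
    exact ⟨h t ht, Sym2.mem_mk_left v t⟩
  have h1 : T.encard ≤ (f : ℕ∞) := by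
    rw [← hinj.encard_image]
    exact le_trans (Set.encard_le_encard hsub) (hdeg v)
  obtain ⟨hfin, n0, hn0, hle⟩ := Set.encard_le_coe_iff.mp h1
  rw [Set.ncard_def, hn0]
  simpa using hle

lemma goodpair {V : Type*} {F : Set (Sym2 V)} {f : ℕ}
    (hdeg : maxDegLe F f) (hFirr : ∀ x : V, s(x, x) ∉ F)
    (X Y X' Y' : Set V) (p q : V)
    (hXfin : X.Finite) (hYfin : Y.Finite)
    (hX' : X' ⊆ X) (hY' : Y' ⊆ Y)
    (hXc : X'.ncard = min X.ncard (2 * f + 1)) (hYc : Y'.ncard = min Y.ncard (2 * f + 1))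
    (hp : p ∈ X) (hq : q ∈ Y) (hpqF : s(p, q) ∉ F) :
    ∃ a ∈ X', ∃ b ∈ Y', s(p, a) ∉ F ∧ s(q, b) ∉ F ∧ s(a, b) ∉ F := by
  by_contra hcon
  push_neg at hcon
  have hX'fin : X'.Finite := hXfin.subset hX'
  have hY'fin : Y'.Finite := hYfin.subset hY'
  set X'' : Set V := {a ∈ X' | s(p, a) ∉ F} with hX''def
  set Y'' : Set V := {b ∈ Y' | s(q, b) ∉ F} with hY''def
  have hX''sub : X'' ⊆ X' := Set.sep_subset _ _
  have hY''sub : Y'' ⊆ Y' := Set.sep_subset _ _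
  have hX''fin : X''.Finite := hX'fin.subset hX''sub
  have hY''fin : Y''.Finite := hY'fin.subset hY''sub
  -- bad elements in X' number at most f
  have hXdiff : (X' \ X'').ncard ≤ f := by
    apply count_le hdeg p _ (hX'fin.subset Set.diff_subset)
    intro t ht
    simp only [hX''def, Set.mem_diff, Set.mem_sep_iff, not_and, not_not] at ht
    exact ht.2 ht.1
  have hYdiff : (Y' \ Y'').ncard ≤ f := by
    apply count_le hdeg q _ (hY'fin.subset Set.diff_subset)
    intro t ht
    simp only [hY''def, Set.mem_diff, Set.mem_sep_iff, not_and, not_not] at ht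
    exact ht.2 ht.1
  have hXsplit : X'.ncard ≤ X''.ncard + f := by
    calc X'.ncard = (X'' ∪ (X' \ X'')).ncard := by rw [Set.union_diff_cancel hX''sub]
    _ ≤ X''.ncard + (X' \ X'').ncard := Set.ncard_union_le _ _
    _ ≤ X''.ncard + f := by omega
  have hYsplit : Y'.ncard ≤ Y''.ncard + f := by
    calc Y'.ncard = (Y'' ∪ (Y' \ Y'')).ncard := by rw [Set.union_diff_cancel hY''sub]
    _ ≤ Y''.ncard + (Y' \ Y'').ncard := Set.ncard_union_le _ _
    _ ≤ Y''.ncard + f := by omega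
  -- nonemptiness
  have hY''ne : Y''.Nonempty := by
    rw [Set.nonempty_iff_ne_empty]
    intro hemp
    have hall : ∀ b ∈ Y', s(q, b) ∈ F := by
      intro b hb
      by_contra hb'
      exact (Set.eq_empty_iff_forall_notMem.mp hemp b) ⟨hb, hb'⟩
    have hle : Y'.ncard ≤ f := count_le hdeg q _ hY'fin hall
    have : Y'.ncard = Y.ncard := by
      rcases min_cases Y.ncard (2 * f + 1) with ⟨h1, _⟩ | ⟨h1, h2⟩ <;> omega
    have hYeq : Y' = Y := Set.eq_of_subset_of_ncard_le hY' this.ge hYfin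
    exact hFirr q (hall q (hYeq ▸ hq))
  have hX''ne : X''.Nonempty := by
    rw [Set.nonempty_iff_ne_empty]
    intro hemp
    have hall : ∀ a ∈ X', s(p, a) ∈ F := by
      intro a ha
      by_contra ha'
      exact (Set.eq_empty_iff_forall_notMem.mp hemp a) ⟨ha, ha'⟩
    have hle : X'.ncard ≤ f := count_le hdeg p _ hX'fin hall
    have : X'.ncard = X.ncard := by
      rcases min_cases X.ncard (2 * f + 1) with ⟨h1, _⟩ | ⟨h1, h2⟩ <;> omega
    have hXeq : X' = X := Set.eq_of_subset_of_ncard_le hX' this.ge hXfin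
    exact hFirr p (hall p (hXeq ▸ hp))
  -- X'' and Y'' are small
  have hX''small : X''.ncard ≤ f := by
    obtain ⟨b, hb⟩ := hY''ne
    apply count_le hdeg b _ hX''fin
    intro a ha
    rw [Sym2.eq_swap]
    exact hcon a (hX''sub ha) b (hY''sub hb) ha.2 hb.2
  have hY''small : Y''.ncard ≤ f := by
    obtain ⟨a, ha⟩ := hX''ne
    apply count_le hdeg a _ hY''fin
    intro b hb
    exact hcon a (hX''sub ha) b (hY''sub hb) ha.2 hb.2
  -- so X' = X and Y' = Y
  have hXeq : X' = X := by
    apply Set.eq_of_subset_of_ncard_le hX' _ hXfin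
    have : X'.ncard = X.ncard := by
      rcases min_cases X.ncard (2 * f + 1) with ⟨h1, _⟩ | ⟨h1, h2⟩ <;> omega
    omega
  have hYeq : Y' = Y := by
    apply Set.eq_of_subset_of_ncard_le hY' _ hYfin
    have : Y'.ncard = Y.ncard := by
      rcases min_cases Y.ncard (2 * f + 1) with ⟨h1, _⟩ | ⟨h1, h2⟩ <;> omega
    omega
  exact hpqF (hcon p (hXeq ▸ hp) q (hYeq ▸ hq) (hFirr p) (hFirr q))

lemma step {V : Type*} [Fintype V] [MetricSpace V] {f : ℕ} {ε : ℝ} (hf : 1 ≤ f) (hε : 0 < ε)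
    {G : SimpleGraph V} {F : Set (Sym2 V)} (hF : F ⊆ G.edgeSet) (hdeg : maxDegLe F f)
    (X Y X' Y' : Set V)
    (hws' : ∀ x ∈ X, ∀ y ∈ Y, (2 + 4 / ε) * max (Metric.diam X) (Metric.diam Y) ≤ dist x y)
    (hX' : X' ⊆ X) (hY' : Y' ⊆ Y)
    (hXc : X'.ncard = min X.ncard (2 * f + 1)) (hYc : Y'.ncard = min Y.ncard (2 * f + 1))
    (hadj : ∀ a ∈ X', ∀ b ∈ Y', a ≠ b → G.Adj a b)
    (p q : V) (hp : p ∈ X) (hq : q ∈ Y) (hpq : p ≠ q) (hpqF : s(p, q) ∉ F)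
    (IH : ∀ p' q' : V, s(p', q') ∉ F → dist p' q' < dist p q →
      ∃ w : (G.deleteEdges F).Walk p' q', wlen w ≤ (1 + ε) * dist p' q') :
    ∃ w : (G.deleteEdges F).Walk p q, wlen w ≤ (1 + ε) * dist p q := by
  have hFirr : ∀ x : V, s(x, x) ∉ F := fun x hx => G.irrefl ((G.mem_edgeSet).mp (hF hx))
  set M : ℝ := max (Metric.diam X) (Metric.diam Y) with hMdef
  have hM0 : 0 ≤ M := le_trans Metric.diam_nonneg (le_max_left _ _)
  have hcM : (2 + 4 / ε) * M ≤ dist p q := hws' p hp q hq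
  have hr : 0 < dist p q := dist_pos.mpr hpq
  have h4ε : 0 < 4 / ε := by positivity
  have hεM : (2 * ε + 4) * M ≤ ε * dist p q := by
    have h1 : ε * ((2 + 4 / ε) * M) ≤ ε * dist p q :=
      mul_le_mul_of_nonneg_left hcM hε.le
    have h2 : ε * ((2 + 4 / ε) * M) = (2 * ε + 4) * M := by
      field_simp
    linarith
  have hMlt : M < dist p q := by nlinarith
  have hbndX : Bornology.IsBounded X := (Set.toFinite X).isBounded
  have hbndY : Bornology.IsBounded Y := (Set.toFinite Y).isBounded
  obtain ⟨a, ha, b, hb, hpaF, hqbF, habF⟩ :=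
    goodpair hdeg hFirr X Y X' Y' p q (Set.toFinite X) (Set.toFinite Y)
      hX' hY' hXc hYc hp hq hpqF
  have haX : a ∈ X := hX' ha
  have hbY : b ∈ Y := hY' hb
  have hdpa : dist p a ≤ M :=
    le_trans (Metric.dist_le_diam_of_mem hbndX hp haX) (le_max_left _ _)
  have hdbq : dist b q ≤ M :=
    le_trans (Metric.dist_le_diam_of_mem hbndY hbY hq) (le_max_right _ _)
  have hab : a ≠ b := by
    rintro rfl
    have h0 : (2 + 4 / ε) * M ≤ dist a a := hws' a haX a hbY
    rw [dist_self] at h0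
    have hM00 : M = 0 := by nlinarith
    have h1 : dist p a ≤ M := hdpa
    have h2 : dist a q ≤ M := by
      calc dist a q ≤ Metric.diam Y := Metric.dist_le_diam_of_mem hbndY hbY hq
      _ ≤ M := le_max_right _ _
    have := dist_triangle p a q
    linarith
  obtain ⟨w1, hw1⟩ := IH p a hpaF (lt_of_le_of_lt hdpa hMlt)
  obtain ⟨w2, hw2⟩ := IH b q (by rw [Sym2.eq_swap]; exact hqbF) (lt_of_le_of_lt hdbq hMlt)
  have hedge : (G.deleteEdges F).Adj a b :=
    SimpleGraph.deleteEdges_adj.mpr ⟨hadj a ha b hb hab, habF⟩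
  refine ⟨w1.append (SimpleGraph.Walk.cons hedge w2), ?_⟩
  rw [wlen_append, wlen_cons]
  have htri : dist a b ≤ dist a p + dist p q + dist q b := dist_triangle4 a p q b
  rw [dist_comm a p, dist_comm q b] at htri
  have hb1 : wlen w1 ≤ (1 + ε) * M :=
    le_trans hw1 (mul_le_mul_of_nonneg_left hdpa (by linarith))
  have hb2 : wlen w2 ≤ (1 + ε) * M :=
    le_trans hw2 (mul_le_mul_of_nonneg_left hdbq (by linarith))
  nlinarith

theorem stmt8 {V : Type*} [Fintype V] [MetricSpace V] (f m : ℕ) (ε : ℝ)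
    (hf : 1 ≤ f) (hε : 0 < ε)
    -- a WSPD of size m with separation ratio c = 2 + 4/ε
    (A B : Fin m → Set V)
    (hAne : ∀ i, (A i).Nonempty) (hBne : ∀ i, (B i).Nonempty)
    (hws : ∀ i, ∀ x ∈ A i, ∀ y ∈ B i,
      (2 + 4 / ε) * max (Metric.diam (A i)) (Metric.diam (B i)) ≤ dist x y)
    (hsep : ∀ p q : V, p ≠ q →
      ∃! i : Fin m, (p ∈ A i ∧ q ∈ B i) ∨ (p ∈ B i ∧ q ∈ A i))
    -- the chosen subsets A'_i and B'_i
    (A' B' : Fin m → Set V)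
    (hA'sub : ∀ i, A' i ⊆ A i) (hB'sub : ∀ i, B' i ⊆ B i)
    (hA'card : ∀ i, (A' i).ncard = min ((A i).ncard) (2 * f + 1))
    (hB'card : ∀ i, (B' i).ncard = min ((B i).ncard) (2 * f + 1))
    -- G contains, for each i, the complete bipartite graph between A'_i and B'_i
    (G : SimpleGraph V)
    (hG : ∀ x y : V, x ≠ y →
      (G.Adj x y ↔ ∃ i : Fin m, (x ∈ A' i ∧ y ∈ B' i) ∨ (x ∈ B' i ∧ y ∈ A' i)))
    (F : Set (Sym2 V)) (hF : F ⊆ G.edgeSet) (hdeg : maxDegLe F f)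
    -- {p,q} is an edge of K_S \ F
    (p q : V) (hpq : p ≠ q) (hpqF : s(p, q) ∉ F) :
    gdist (G.deleteEdges F) p q ≤ (1 + ε) * dist p q := by
  classical
  have main : ∀ n : ℕ, ∀ p' q' : V, s(p', q') ∉ F →
      (Finset.univ.filter (fun x : V × V => dist x.1 x.2 < dist p' q')).card < n →
      ∃ w : (G.deleteEdges F).Walk p' q', wlen w ≤ (1 + ε) * dist p' q' := by
    intro n
    induction n with
    | zero => intro p' q' _ h; omega
    | succ n IH =>
      intro p' q' hF' hcard
      by_cases hne : p' = q'
      · subst hne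
        refine ⟨SimpleGraph.Walk.nil, ?_⟩
        rw [wlen_nil, dist_self, mul_zero]
      · obtain ⟨i, hi, _⟩ := hsep p' q' hne
        have IH' : ∀ a b : V, s(a, b) ∉ F → dist a b < dist p' q' →
            ∃ w : (G.deleteEdges F).Walk a b, wlen w ≤ (1 + ε) * dist a b := by
          intro a b habF hlt
          apply IH a b habF
          have hsub : (Finset.univ.filter (fun x : V × V => dist x.1 x.2 < dist a b)) ⊆
              (Finset.univ.filter (fun x : V × V => dist x.1 x.2 < dist p' q')) := by
            intro x hx
            simp only [Finset.mem_filter] at *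
            exact ⟨hx.1, lt_trans hx.2 hlt⟩
          have hmem : (a, b) ∈
              (Finset.univ.filter (fun x : V × V => dist x.1 x.2 < dist p' q')) := by
            simp [hlt]
          have hss : (Finset.univ.filter (fun x : V × V => dist x.1 x.2 < dist a b)) ⊂
              (Finset.univ.filter (fun x : V × V => dist x.1 x.2 < dist p' q')) := by
            refine ⟨hsub, fun hcon => ?_⟩
            have := hcon hmem
            simp at this
          have := Finset.card_lt_card hss
          omega
        rcases hi with ⟨hpA, hqB⟩ | ⟨hpB, hqA⟩
        · exact step hf hε hF hdeg (A i) (B i) (A' i) (B' i) (hws i)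
            (hA'sub i) (hB'sub i) (hA'card i) (hB'card i)
            (fun a ha b hb hab => (hG a b hab).mpr ⟨i, Or.inl ⟨ha, hb⟩⟩)
            p' q' hpA hqB hne hF' IH'
        · refine step hf hε hF hdeg (B i) (A i) (B' i) (A' i) ?_
            (hB'sub i) (hA'sub i) (hB'card i) (hA'card i)
            (fun a ha b hb hab => (hG a b hab).mpr ⟨i, Or.inr ⟨ha, hb⟩⟩)
            p' q' hpB hqA hne hF' IH'
          intro x hx y hy
          rw [max_comm, dist_comm]
          exact hws i y hy x hx
  obtain ⟨w, hw⟩ := main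
    ((Finset.univ.filter (fun x : V × V => dist x.1 x.2 < dist p q)).card + 1)
    p q hpqF (Nat.lt_succ_self _)
  have hle : gdist (G.deleteEdges F) p q ≤ wlen w := by
    apply csInf_le
    · exact ⟨0, fun l ⟨w', hw'⟩ => hw' ▸ wlen_nonneg w'⟩
    · exact ⟨w, rfl⟩
  linarith
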